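/- Let R = ⊕_{m∈ℤ} R_m be a ℤ-graded associative algebra over a field k, and let D be a locally nilpotent k-linear derivation of R admitting a decomposition D = D_p + D_{p+1} + ... + D_q (p ≤ q), where each D_i is a k-linear map satisfying D_i(R_m) ⊆ R_{i+m} for all m ∈ ℤ, and D_q ≠ 0. Then D_q is locally nilpotent, i.e., for every a ∈ R there exists a natural number m with D_q^m(a) = 0. -/

import Mathlib

/-!
Write `g = D_q` and `f = D`, so that `g` is homogeneous of degree `q` and `f - g` maps `R_j` into
degrees `< q + j`. For `a ∈ R_m`, induction on `n` shows that `g^n a ∈ R_{m+nq}` while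
`f^n a - g^n a` lies in degrees `< m + nq`. Hence if `f^n a = 0`, then `g^n a` lies in both, so it
vanishes. Homogeneous elements span `R`, and the vectors killed by a power of `g` form a subspace.
-/

section

variable {k M : Type*} [CommRing k] [AddCommGroup M] [Module k M] {𝒜 : ℤ → Submodule k M}

variable (𝒜) in
def degreeBelow (N : ℤ) : Submodule k M := ⨆ j ∈ Set.Iio N, 𝒜 j

lemma le_degreeBelow {j N : ℤ} (h : j < N) : 𝒜 j ≤ degreeBelow 𝒜 N :=
  le_biSup 𝒜 h

lemma degreeBelow_mono {N N' : ℤ} (h : N ≤ N') : degreeBelow 𝒜 N ≤ degreeBelow 𝒜 N' :=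
  biSup_mono fun _ hj => lt_of_lt_of_le hj h

lemma disjoint_degreeBelow (h : iSupIndep 𝒜) (N : ℤ) : Disjoint (𝒜 N) (degreeBelow 𝒜 N) :=
  h.disjoint_biSup (lt_irrefl N)

variable {f g : Module.End k M} {q : ℤ}

lemma map_mem_degreeBelow (hg : ∀ j, ∀ a ∈ 𝒜 j, g a ∈ 𝒜 (q + j))
    (hfg : ∀ j, ∀ a ∈ 𝒜 j, (f - g) a ∈ degreeBelow 𝒜 (q + j)) {N : ℤ} {a : M}
    (ha : a ∈ degreeBelow 𝒜 N) : f a ∈ degreeBelow 𝒜 (q + N) := by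
  suffices degreeBelow 𝒜 N ≤ (degreeBelow 𝒜 (q + N)).comap f from this ha
  refine iSup₂_le fun j (hj : j < N) b hb => ?_
  rw [Submodule.mem_comap, ← sub_add_cancel f g, LinearMap.add_apply]
  exact add_mem (degreeBelow_mono (by omega) (hfg j b hb)) (le_degreeBelow (by omega) (hg j b hb))

lemma pow_apply_mem (hg : ∀ j, ∀ a ∈ 𝒜 j, g a ∈ 𝒜 (q + j)) {m : ℤ} {a : M} (ha : a ∈ 𝒜 m)
    (n : ℕ) : (g ^ n) a ∈ 𝒜 (n * q + m) := by
  induction n with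
  | zero => simpa using ha
  | succ n ih =>
    rw [pow_succ', Module.End.mul_apply, show ((n + 1 : ℕ) : ℤ) * q + m = q + (n * q + m) by
      push_cast; ring]
    exact hg _ _ ih

lemma pow_apply_sub_pow_apply_mem_degreeBelow (hg : ∀ j, ∀ a ∈ 𝒜 j, g a ∈ 𝒜 (q + j))
    (hfg : ∀ j, ∀ a ∈ 𝒜 j, (f - g) a ∈ degreeBelow 𝒜 (q + j)) {m : ℤ} {a : M} (ha : a ∈ 𝒜 m)
    (n : ℕ) : (f ^ n) a - (g ^ n) a ∈ degreeBelow 𝒜 (n * q + m) := by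
  induction n with
  | zero => simp
  | succ n ih =>
    have hstep : (f ^ (n + 1)) a - (g ^ (n + 1)) a =
        f ((f ^ n) a - (g ^ n) a) + (f - g) ((g ^ n) a) := by
      simp only [pow_succ', Module.End.mul_apply, map_sub, LinearMap.sub_apply]
      abel
    rw [hstep, show ((n + 1 : ℕ) : ℤ) * q + m = q + (n * q + m) by push_cast; ring]
    exact add_mem (map_mem_degreeBelow hg hfg ih) (hfg _ _ (pow_apply_mem hg ha n))

lemma exists_pow_apply_eq_zero_of_mem (hind : iSupIndep 𝒜)
    (hg : ∀ j, ∀ a ∈ 𝒜 j, g a ∈ 𝒜 (q + j))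
    (hfg : ∀ j, ∀ a ∈ 𝒜 j, (f - g) a ∈ degreeBelow 𝒜 (q + j))
    (hf : ∀ a, ∃ n : ℕ, (f ^ n) a = 0) {m : ℤ} {a : M} (ha : a ∈ 𝒜 m) :
    ∃ n : ℕ, (g ^ n) a = 0 := by
  obtain ⟨n, hn⟩ := hf a
  have hlow := pow_apply_sub_pow_apply_mem_degreeBelow hg hfg ha n
  rw [hn, zero_sub, neg_mem_iff] at hlow
  exact ⟨n, (Submodule.disjoint_def.mp (disjoint_degreeBelow hind _)) _
    (pow_apply_mem hg ha n) hlow⟩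

theorem exists_pow_apply_eq_zero_of_leading (h : DirectSum.IsInternal 𝒜)
    (hg : ∀ j, ∀ a ∈ 𝒜 j, g a ∈ 𝒜 (q + j))
    (hfg : ∀ j, ∀ a ∈ 𝒜 j, (f - g) a ∈ degreeBelow 𝒜 (q + j))
    (hf : ∀ a, ∃ n : ℕ, (f ^ n) a = 0) (a : M) : ∃ n : ℕ, (g ^ n) a = 0 := by
  have hle : ⨆ m, 𝒜 m ≤ g.maxGenEigenspace 0 := iSup_le fun m b hb => by
    simpa using exists_pow_apply_eq_zero_of_mem h.submodule_iSupIndep hg hfg hf hb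
  simpa using hle (h.submodule_iSup_eq_top ▸ Submodule.mem_top : a ∈ ⨆ m, 𝒜 m)

end

theorem highest_component_of_locally_nilpotent_derivation_is_locally_nilpotent_general
    {k R : Type*} [Field k] [Ring R] [Algebra k R]
    (𝒜 : ℤ → Submodule k R)
    (hdirect : DirectSum.IsInternal 𝒜)
    (D : R →ₗ[k] R)
    (hln : ∀ a : R, ∃ m : ℕ, (D ^ m) a = 0)
    (p q : ℤ) (hpq : p ≤ q)
    (Dc : ℤ → (R →ₗ[k] R))
    (hdecomp : D = ∑ i ∈ Finset.Icc p q, Dc i)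
    (hgraded : ∀ i ∈ Finset.Icc p q, ∀ (m : ℤ), ∀ a ∈ 𝒜 m, Dc i a ∈ 𝒜 (i + m)) :
    ∀ a : R, ∃ m : ℕ, (Dc q ^ m) a = 0 := by
  have hq : q ∈ Finset.Icc p q := Finset.mem_Icc.mpr ⟨hpq, le_rfl⟩
  have hlower : ∀ j, ∀ a ∈ 𝒜 j, (D - Dc q) a ∈ degreeBelow 𝒜 (q + j) := by
    intro j a ha
    rw [hdecomp, ← Finset.sum_erase_eq_sub hq, LinearMap.coe_sum, Finset.sum_apply]
    refine Submodule.sum_mem _ fun i hi => ?_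
    have hiq : i < q := lt_of_le_of_ne (Finset.mem_Icc.mp (Finset.mem_of_mem_erase hi)).2
      (Finset.ne_of_mem_erase hi)
    exact le_degreeBelow (by omega) (hgraded i (Finset.mem_of_mem_erase hi) j a ha)
  exact exists_pow_apply_eq_zero_of_leading hdirect (hgraded q hq) hlower hln

/-- Let `R = ⊕_{m ∈ ℤ} R_m` be a ℤ-graded associative algebra over a field `k` and let
`D` be a locally nilpotent `k`-linear derivation of `R` admitting a decomposition
`D = D_p + ⋯ + D_q` with `D_i (R_m) ⊆ R_{i+m}` for all `m` and `D_q ≠ 0`.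
Then `D_q` is locally nilpotent. -/
theorem highest_component_of_locally_nilpotent_derivation_is_locally_nilpotent
    {k R : Type*} [Field k] [Ring R] [Algebra k R]
    (𝒜 : ℤ → Submodule k R)
    (hdirect : DirectSum.IsInternal 𝒜)
    (hmul : ∀ (m n : ℤ), ∀ a ∈ 𝒜 m, ∀ b ∈ 𝒜 n, a * b ∈ 𝒜 (m + n))
    (D : R →ₗ[k] R)
    (hder : ∀ a b : R, D (a * b) = D a * b + a * D b)
    (hln : ∀ a : R, ∃ m : ℕ, (D ^ m) a = 0)
    (p q : ℤ) (hpq : p ≤ q)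
    (Dc : ℤ → (R →ₗ[k] R))
    (hdecomp : D = ∑ i ∈ Finset.Icc p q, Dc i)
    (hgraded : ∀ i ∈ Finset.Icc p q, ∀ (m : ℤ), ∀ a ∈ 𝒜 m, Dc i a ∈ 𝒜 (i + m))
    (hne : Dc q ≠ 0) :
    ∀ a : R, ∃ m : ℕ, (Dc q ^ m) a = 0 :=
  highest_component_of_locally_nilpotent_derivation_is_locally_nilpotent_general 𝒜 hdirect D hln p q
    hpq Dc hdecomp hgraded
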